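/- Let 𝔽_q be a finite field with q elements (q a prime power ≥ 2) and K := 𝔽_q(θ) the rational function field. Define D_0 := 1 and, for i ≥ 1, D_i := ∏_{j=1}^{i} (θ^{q^j} − θ)^{q^{i−j}} ∈ K. Let exp_C ∈ K[[z]] be the power series whose coefficient of z^m equals D_i^{−1} if m = q^i for some i ≥ 0 and 0 otherwise (the Carlitz exponential series). Then PowerSeries.rescale θ (exp_C) − θ·exp_C = (exp_C)^q, i.e. exp_C(θz) = θ·exp_C(z) + exp_C(z)^q; this is the identity d_C(exp_C) = exp_C. -/

import Mathlib

/-!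
Compare coefficients of `z ^ m`, writing `c_m` for those of `exp_C`. On the left the coefficient
is `(θ ^ m - θ) c_m`, which vanishes unless `m = q ^ (i + 1)`. On the right, in characteristic `p`
with `q = p ^ n`, the `q`-th power is the Frobenius twist of the series expanded by `z ↦ z ^ q`, so
its coefficient is `c_{m/q} ^ q` when `q ∣ m` and `0` otherwise. Both sides therefore reduce to the
recursion `D_{i+1} = (θ ^ q ^ (i + 1) - θ) D_i ^ q`.
-/

open scoped Classical

/-- `D_i = ∏_{j=1}^{i} (θ^{q^j} - θ)^{q^{i-j}}` in `K = 𝔽_q(θ)` (with `D_0 = 1`). -/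
noncomputable def carlitzD (Fq : Type*) [Field Fq] (q i : ℕ) : RatFunc Fq :=
  ∏ j ∈ Finset.Icc 1 i, ((RatFunc.X : RatFunc Fq) ^ q ^ j - RatFunc.X) ^ q ^ (i - j)

/-- The Carlitz exponential series `exp_C = ∑_{i ≥ 0} D_i⁻¹ z^{q^i}` over `K = 𝔽_q(θ)`:
the coefficient of `z^m` is `D_i⁻¹` if `m = q^i` for some `i ≥ 0`, and `0` otherwise. -/
noncomputable def carlitzExp (Fq : Type*) [Field Fq] (q : ℕ) :
    PowerSeries (RatFunc Fq) :=
  PowerSeries.mk fun m =>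
    if h : ∃ i : ℕ, m = q ^ i then (carlitzD Fq q h.choose)⁻¹ else 0

open PowerSeries

theorem PowerSeries.coeff_pow_expChar_pow {R : Type*} [CommRing R] (p : ℕ) [ExpChar R p]
    (n : ℕ) (f : PowerSeries R) (m : ℕ) :
    coeff m (f ^ p ^ n) = if p ^ n ∣ m then coeff (m / p ^ n) f ^ p ^ n else 0 := by
  have hp : p ≠ 0 := expChar_ne_zero R p
  have h : map (iterateFrobenius R p n) (expand (p ^ n) (pow_ne_zero n hp) f) = f ^ p ^ n :=
    MvPowerSeries.map_iterateFrobenius_expand p hp f n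
  rw [← h, coeff_map, coeff_expand]
  split_ifs <;> simp [iterateFrobenius_def, hp]

theorem PowerSeries.coeff_pow_card {K : Type*} [Field K] [Fintype K] {R : Type*} [CommRing R]
    [Algebra K R] [FaithfulSMul K R] (f : PowerSeries R) (m : ℕ) :
    coeff m (f ^ Fintype.card K) =
      if Fintype.card K ∣ m then coeff (m / Fintype.card K) f ^ Fintype.card K else 0 := by
  obtain ⟨p, _, n, hp, hcard⟩ := FiniteField.card' K
  have := Fact.mk hp
  have : CharP R p := charP_of_injective_algebraMap' K p
  rw [hcard, coeff_pow_expChar_pow p]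

theorem RatFunc.X_pow_sub_X_ne_zero {K : Type*} [Field K] {n : ℕ} (hn : 1 < n) :
    (RatFunc.X : RatFunc K) ^ n - RatFunc.X ≠ 0 := by
  simpa [RatFunc.algebraMap_X] using
    RatFunc.algebraMap_ne_zero (FiniteField.X_pow_card_sub_X_ne_zero K hn)

section Carlitz

variable {Fq : Type*} [Field Fq] {q : ℕ}

theorem carlitzD_succ (i : ℕ) :
    carlitzD Fq q (i + 1) =
      ((RatFunc.X : RatFunc Fq) ^ q ^ (i + 1) - RatFunc.X) * carlitzD Fq q i ^ q := by
  rw [carlitzD, Finset.prod_Icc_succ_top (Nat.le_add_left 1 i), Nat.sub_self, pow_zero, pow_one,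
    mul_comm, carlitzD, ← Finset.prod_pow]
  congr 1
  refine Finset.prod_congr rfl fun j hj => ?_
  rw [← pow_mul, ← pow_succ, Nat.sub_add_comm (Finset.mem_Icc.1 hj).2]

theorem inv_carlitzD_pow (hq : 1 < q) (i : ℕ) :
    (carlitzD Fq q i)⁻¹ ^ q =
      ((RatFunc.X : RatFunc Fq) ^ q ^ (i + 1) - RatFunc.X) * (carlitzD Fq q (i + 1))⁻¹ := by
  have hX : (RatFunc.X : RatFunc Fq) ^ q ^ (i + 1) - RatFunc.X ≠ 0 :=
    RatFunc.X_pow_sub_X_ne_zero (Nat.one_lt_pow (Nat.succ_ne_zero i) hq)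
  rw [carlitzD_succ, mul_inv, ← mul_assoc, mul_inv_cancel₀ hX, one_mul, inv_pow]

theorem coeff_carlitzExp_pow (hq : 1 < q) (i : ℕ) :
    coeff (q ^ i) (carlitzExp Fq q) = (carlitzD Fq q i)⁻¹ := by
  have h : ∃ j, q ^ i = q ^ j := ⟨i, rfl⟩
  rw [carlitzExp, coeff_mk, dif_pos h, Nat.pow_right_injective hq h.choose_spec.symm]

theorem coeff_carlitzExp_of_forall_ne_pow {m : ℕ} (h : ∀ i, m ≠ q ^ i) :
    coeff m (carlitzExp Fq q) = 0 := by
  rw [carlitzExp, coeff_mk, dif_neg (by simpa using h)]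

end Carlitz

/-- The Carlitz exponential series satisfies
`exp_C(θ z) - θ·exp_C(z) = exp_C(z)^q`, i.e. `d_C(exp_C) = exp_C`. -/
theorem carlitzExp_difference_equation (Fq : Type*) [Field Fq] [Fintype Fq]
    (q : ℕ) (hq : Fintype.card Fq = q) (hq2 : 2 ≤ q) :
    PowerSeries.rescale (RatFunc.X : RatFunc Fq) (carlitzExp Fq q)
        - PowerSeries.C (RatFunc.X : RatFunc Fq) * carlitzExp Fq q
      = carlitzExp Fq q ^ q := by
  have hq1 : 1 < q := hq2
  ext m
  rw [map_sub, coeff_rescale, coeff_C_mul, ← sub_mul, ← hq, coeff_pow_card (K := Fq), hq]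
  by_cases hm : ∃ i, m = q ^ i
  · obtain ⟨_ | i, rfl⟩ := hm
    · simp [Nat.dvd_one, hq1.ne']
    · rw [if_pos (dvd_pow_self q i.succ_ne_zero), pow_succ, Nat.mul_div_cancel _ (by omega),
        ← pow_succ, coeff_carlitzExp_pow hq1, coeff_carlitzExp_pow hq1, inv_carlitzD_pow hq1]
  · simp only [not_exists] at hm
    rw [coeff_carlitzExp_of_forall_ne_pow hm, mul_zero]
    split_ifs with hdvd
    · rw [coeff_carlitzExp_of_forall_ne_pow fun i hi => hm (i + 1) ?_, zero_pow (by omega)]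
      rw [pow_succ, ← hi, Nat.div_mul_cancel hdvd]
    · rfl
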